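/- Let n ≥ 1, let λ = (λ_1,…,λ_n) ∈ ℂⁿ satisfy λ_1 + ⋯ + λ_n = 0, let ς ∈ {+1,−1}, let 1 ≤ l ≤ n, and let V_0, …, V_n be the Bessel-equation coefficients attached to (n, λ). Define f : (0,∞) → ℂ by f(x) = ∑_{m=0}^{∞} (ς·iⁿ)ᵐ · x^{n(m−λ_l)} / ∏_{k=1}^n Γ(λ_k − λ_l + m + 1), where x^w = exp(w·log x) for x > 0 and 1/Γ is the entire reciprocal Gamma function. Then the series converges absolutely for every x > 0, f is infinitely differentiable on (0,∞), and for every x > 0 one has ∑_{j=0}^n V_j · x^j · f^{(j)}(x) = ς · iⁿ · nⁿ · xⁿ · f(x); that is, the Bessel function of the first kind J_l(x; ς, λ) solves the Bessel differential equation ∑_{j=1}^n V_j x^j w^{(j)} + (V_0 − ς(in)ⁿ xⁿ) w = 0 of sign ς. -/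

import Mathlib

open MeasureTheory

/-- The shifted double sequence `besselA' (j+1) (m+1) = A(j, m)`, where
`A(-1,0) = 1`, `A(-1,m) = 0` for `m ≥ 1`, `A(j,-1) = 0` for `j ≥ 0`, and
`A(j,m) = j·A(j,m-1) + A(j-1,m)` for `j, m ≥ 0`. -/
def besselA' : ℕ → ℕ → ℤ
  | 0, 0 => 0
  | 0, 1 => 1
  | 0, _ + 2 => 0
  | _ + 1, 0 => 0
  | j + 1, m + 1 => (j : ℤ) * besselA' (j + 1) m + besselA' j (m + 1)
termination_by j m => (j, m)

/-- `besselA j m = A(j, m)` for `j, m ≥ 0`. -/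
def besselA (j m : ℕ) : ℤ := besselA' (j + 1) (m + 1)

/-- The elementary symmetric polynomial of degree `m` in `λ_1, …, λ_N`. -/
noncomputable def esymm {N : ℕ} (lam : Fin N → ℂ) (m : ℕ) : ℂ :=
  ∑ t ∈ Finset.powersetCard m (Finset.univ : Finset (Fin N)), ∏ l ∈ t, lam l

/-- The Bessel-equation coefficients `V_j` attached to `(n, λ)`:
`V_j = ∑_{m=0}^{n-j} A(j, n-j-m) · nᵐ · e_m(λ)`. -/
noncomputable def besselV (n : ℕ) (lam : Fin n → ℂ) (j : ℕ) : ℂ :=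
  ∑ m ∈ Finset.range (n - j + 1), (besselA j (n - j - m) : ℂ) * (n : ℂ) ^ m * esymm lam m

/-!
Write `J(x) = ∑ₘ cₘ x^(eₘ)` with `eₘ = n(m - λ_l)`. Since `x^j (d/dx)^j x^e = (e)_j x^e` with the
falling factorial `(e)_j`, the left side is the series with coefficients `(∑_j V_j (eₘ)_j) cₘ`.
Expanding `∏_k (e + nλ_k)` in powers of `e` (elementary symmetric functions) and the powers in
falling factorials (Stirling numbers of the second kind `S(j + m, j) = A(j, m)`) shows
`∑_j V_j (e)_j = ∏_k (e + nλ_k)`. The new coefficient `∏_k (eₘ + nλ_k) cₘ` vanishes for `m = 0`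
(the factor `k = l`) and, by the recurrence of `1/Γ`, equals `ς iⁿ nⁿ cₘ₋₁` for `m ≥ 1`; so the
series is `ς iⁿ nⁿ xⁿ J(x)`.
The factors `1/Γ` make `cₘ` decay faster than any geometric sequence, which justifies all the
termwise differentiation on `(0, ∞)`.
-/

open Finset Polynomial

theorem besselA_zero (m : ℕ) : besselA 0 m = if m = 0 then 1 else 0 := by
  cases m <;> simp [besselA, besselA']

theorem besselA_succ_zero (j : ℕ) : besselA (j + 1) 0 = besselA j 0 := by
  simp [besselA, besselA']

theorem besselA_succ_succ (j m : ℕ) :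
    besselA (j + 1) (m + 1) = (j + 1 : ℤ) * besselA (j + 1) m + besselA j (m + 1) := by
  rw [besselA, besselA']; push_cast; rfl

theorem besselA_eq_stirlingSecond : ∀ j m : ℕ, besselA j m = Nat.stirlingSecond (j + m) j
  | 0, m => by cases m <;> simp [besselA_zero]
  | j + 1, 0 => by
    rw [besselA_succ_zero, besselA_eq_stirlingSecond j 0, Nat.add_zero, Nat.add_zero,
      Nat.stirlingSecond_self, Nat.stirlingSecond_self]
  | j + 1, m + 1 => by
    rw [besselA_succ_succ, besselA_eq_stirlingSecond (j + 1) m,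
      besselA_eq_stirlingSecond j (m + 1), show j + 1 + (m + 1) = j + 1 + m + 1 by omega,
      Nat.stirlingSecond_succ_succ, show j + (m + 1) = j + 1 + m by omega]
    push_cast; ring

theorem pow_eq_sum_stirlingSecond_mul_descPochhammer_eval {R : Type*} [CommRing R]
    (k : ℕ) (w : R) :
    w ^ k = ∑ j ∈ range (k + 1), (Nat.stirlingSecond k j : R) * (descPochhammer R j).eval w := by
  induction k with
  | zero => simp
  | succ k ih =>
    have hmul (j : ℕ) : w * (descPochhammer R j).eval w
        = (descPochhammer R (j + 1)).eval w + j * (descPochhammer R j).eval w := by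
      rw [descPochhammer_succ_eval]; ring
    have hshift :
        ∑ j ∈ range (k + 1), (Nat.stirlingSecond k j : R) * (j * (descPochhammer R j).eval w)
        = ∑ j ∈ range (k + 1),
          ((j + 1 : ℕ) * Nat.stirlingSecond k (j + 1) : R) * (descPochhammer R (j + 1)).eval w := by
      rw [sum_range_succ', sum_range_succ, Nat.stirlingSecond_eq_zero_of_lt (Nat.lt_succ_self k)]
      simp only [Nat.cast_zero, mul_zero, zero_mul, add_zero]
      refine sum_congr rfl fun j _ => ?_
      push_cast; ring
    rw [pow_succ', ih, mul_sum]
    simp only [mul_left_comm w, hmul, mul_add, sum_add_distrib]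
    rw [hshift, ← sum_add_distrib, sum_range_succ' _ (k + 1)]
    simp only [Nat.stirlingSecond_succ_succ, Nat.stirlingSecond_succ_zero, Nat.cast_zero, zero_mul,
      add_zero]
    refine sum_congr rfl fun j _ => ?_
    push_cast; ring

theorem prod_add_mul_eq_sum_esymm {N : ℕ} (lam : Fin N → ℂ) (a w : ℂ) :
    ∏ k, (w + a * lam k) = ∑ m ∈ range (N + 1), a ^ m * esymm lam m * w ^ (N - m) := by
  have h := congrArg (eval w) (Multiset.prod_X_add_C_eq_sum_esymm (univ.val.map fun k => a * lam k))
  simp only [Multiset.map_map, Function.comp_def, eval_multiset_prod, eval_add,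
    eval_X, eval_C, eval_finsetSum, eval_mul, eval_pow, Multiset.card_map, card_val, card_univ,
    Fintype.card_fin] at h
  rw [← prod_eq_multiset_prod] at h
  rw [h]
  refine sum_congr rfl fun m _ => ?_
  rw [esymm_map_val, esymm, mul_sum]
  congr 1
  refine sum_congr rfl fun t ht => ?_
  rw [prod_mul_distrib, prod_const, (mem_powersetCard.1 ht).2]

theorem sum_besselV_mul_descPochhammer_eval {n : ℕ} (lam : Fin n → ℂ) (w : ℂ) :
    ∑ j ∈ range (n + 1), besselV n lam j * (descPochhammer ℂ j).eval w
      = ∏ k, (w + n * lam k) := by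
  simp_rw [prod_add_mul_eq_sum_esymm, pow_eq_sum_stirlingSecond_mul_descPochhammer_eval (n - _) w,
    mul_sum, besselV, sum_mul]
  rw [sum_comm' (t' := range (n + 1)) (s' := fun j => range (n - j + 1))]
  · refine sum_congr rfl fun m _ => sum_congr rfl fun j hj => ?_
    rw [besselA_eq_stirlingSecond, show j + (n - j - m) = n - m by simp at hj; omega,
      Int.cast_natCast]
    ring
  · intro m j
    simp only [mem_range]
    omega

open Complex Filter Topology

def SuperGeometricDecay (c : ℕ → ℂ) : Prop :=
  ∀ r : ℝ, Summable fun m => ‖c m‖ * r ^ m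

namespace SuperGeometricDecay

variable {c d : ℕ → ℂ}

theorem mul_affine (hc : SuperGeometricDecay c) (α β : ℂ) :
    SuperGeometricDecay fun m => (α * m + β) * c m := by
  intro r
  refine ((hc (2 * |r|)).mul_left (‖α‖ + ‖β‖)).of_norm_bounded fun m => ?_
  have hm : (m : ℝ) ≤ 2 ^ m := by exact_mod_cast Nat.lt_two_pow_self.le
  have hone : (1 : ℝ) ≤ 2 ^ m := one_le_pow₀ one_le_two
  have hαβ : ‖α * m + β‖ ≤ (‖α‖ + ‖β‖) * 2 ^ m := calc
    ‖α * m + β‖ ≤ ‖α‖ * m + ‖β‖ := by simpa using norm_add_le (α * m) β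
    _ ≤ ‖α‖ * 2 ^ m + ‖β‖ * 2 ^ m := by gcongr; exact le_mul_of_one_le_right (norm_nonneg β) hone
    _ = (‖α‖ + ‖β‖) * 2 ^ m := by ring
  calc ‖‖(α * m + β) * c m‖ * r ^ m‖ = ‖α * m + β‖ * (‖c m‖ * |r| ^ m) := by
        rw [norm_mul, norm_norm, norm_mul, norm_pow, Real.norm_eq_abs]; ring
    _ ≤ (‖α‖ + ‖β‖) * 2 ^ m * (‖c m‖ * |r| ^ m) := by gcongr
    _ = (‖α‖ + ‖β‖) * (‖c m‖ * (2 * |r|) ^ m) := by ring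

theorem pow_mul (hc : SuperGeometricDecay c) (s : ℂ) :
    SuperGeometricDecay fun m => s ^ m * c m := fun r =>
  (hc (‖s‖ * r)).congr fun m => by rw [norm_mul, norm_pow, mul_pow]; ring

theorem mul (hc : SuperGeometricDecay c) (hd : SuperGeometricDecay d) :
    SuperGeometricDecay (c * d) := by
  intro r
  have hd1 : Summable fun m => ‖d m‖ := by simpa using hd 1
  refine ((hc r).norm.mul_right (∑' m, ‖d m‖)).of_norm_bounded fun m => ?_
  have hbound : ‖d m‖ ≤ ∑' m, ‖d m‖ := hd1.le_tsum m fun _ _ => norm_nonneg _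
  calc ‖‖(c * d) m‖ * r ^ m‖ = ‖‖c m‖ * r ^ m‖ * ‖d m‖ := by
        simp only [Pi.mul_apply, norm_mul, norm_norm]; ring
    _ ≤ _ := by gcongr

theorem descPochhammer_eval_mul (hc : SuperGeometricDecay c) (a b : ℂ) (j : ℕ) :
    SuperGeometricDecay fun m => (descPochhammer ℂ j).eval (a * m + b) * c m := by
  induction j with
  | zero => simpa using hc
  | succ j ih =>
    refine fun r => (ih.mul_affine a (b - j) r).congr fun m => ?_
    dsimp only
    rw [descPochhammer_succ_eval]
    ring_nf

end SuperGeometricDecay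

theorem superGeometricDecay_inv_Gamma (z : ℂ) :
    SuperGeometricDecay fun m => (Gamma (z + m + 1))⁻¹ := by
  intro r
  refine summable_of_ratio_norm_eventually_le (r := 1 / 2) (by norm_num) ?_
  obtain ⟨M, hM⟩ := exists_nat_ge (‖z‖ + 2 * |r|)
  filter_upwards [eventually_ge_atTop M] with m hm
  have hlarge : 2 * |r| ≤ ‖z + m + 1‖ := by
    have h : ‖((m + 1 : ℕ) : ℂ)‖ ≤ ‖z + m + 1‖ + ‖z‖ := calc
      _ = ‖(z + m + 1) - z‖ := by push_cast; ring_nf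
      _ ≤ ‖z + m + 1‖ + ‖z‖ := norm_sub_le _ _
    have hm' : (M : ℝ) ≤ m := by exact_mod_cast hm
    rw [Complex.norm_natCast] at h
    push_cast at h
    linarith
  rw [Complex.one_div_Gamma_eq_self_mul_one_div_Gamma_add_one (z + m + 1)]
  push_cast
  rw [← add_assoc]
  simp only [norm_mul, norm_pow, Real.norm_eq_abs, abs_norm, pow_succ]
  have hX : 0 ≤ ‖(Gamma (z + m + 1 + 1))⁻¹‖ * |r| ^ m := by positivity
  nlinarith [mul_le_mul_of_nonneg_left hlarge hX]

theorem superGeometricDecay_inv_prod_Gamma {ι : Type*} [Fintype ι] [Nonempty ι] (z : ι → ℂ) :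
    SuperGeometricDecay fun m => (∏ k, Gamma (z k + m + 1))⁻¹ := by
  have h : SuperGeometricDecay (∏ k, fun m : ℕ => (Gamma (z k + m + 1))⁻¹) :=
    prod_induction_nonempty _ SuperGeometricDecay (fun _ _ => SuperGeometricDecay.mul)
      univ_nonempty fun k _ => superGeometricDecay_inv_Gamma (z k)
  rw [prod_fn] at h
  simpa only [prod_inv_distrib] using h

noncomputable def frobeniusSeries (a : ℕ) (b : ℂ) (c : ℕ → ℂ) (x : ℝ) : ℂ :=
  ∑' m, c m * (x : ℂ) ^ ((a : ℂ) * m + b)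

theorem norm_ofReal_cpow_mul_add {y : ℝ} (hy : 0 < y) (a m : ℕ) (b : ℂ) :
    ‖(y : ℂ) ^ ((a : ℂ) * m + b)‖ = y ^ b.re * (y ^ a) ^ m := by
  rw [Complex.norm_cpow_eq_rpow_re_of_pos hy, ← pow_mul]
  have hre : ((a : ℂ) * m + b).re = ((a * m : ℕ) : ℝ) + b.re := by simp
  rw [hre, Real.rpow_add hy, Real.rpow_natCast, mul_comm]

theorem Real.rpow_le_rpow_add_rpow {p q y : ℝ} (hp : 0 < p) (hpy : p ≤ y) (hyq : y ≤ q) (s : ℝ) :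
    y ^ s ≤ p ^ s + q ^ s := by
  rcases le_total 0 s with hs | hs
  · have := Real.rpow_le_rpow (hp.le.trans hpy) hyq hs
    linarith [Real.rpow_nonneg hp.le s]
  · have := Real.rpow_le_rpow_of_nonpos hp hpy hs
    linarith [Real.rpow_nonneg (hp.le.trans (hpy.trans hyq)) s]

section frobeniusSeries

variable {a : ℕ} {b : ℂ} {c : ℕ → ℂ} {x : ℝ}

theorem SuperGeometricDecay.summable_norm_frobeniusSeries (hc : SuperGeometricDecay c)
    (hx : 0 < x) : Summable fun m => ‖c m * (x : ℂ) ^ ((a : ℂ) * m + b)‖ :=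
  ((hc (x ^ a)).mul_right (x ^ b.re)).congr fun m => by
    rw [norm_mul, norm_ofReal_cpow_mul_add hx]; ring

theorem hasDerivAt_frobeniusSeries (hc : SuperGeometricDecay c) (hx : 0 < x) :
    HasDerivAt (frobeniusSeries a b c)
      (frobeniusSeries a (b - 1) (fun m => (a * m + b) * c m) x) x := by
  set K := (x / 2) ^ (b.re - 1) + (2 * x) ^ (b.re - 1)
  have hbound (m : ℕ) (y : ℝ) (hy : y ∈ Set.Ioo (x / 2) (2 * x)) :
      ‖(a * m + b) * c m * (y : ℂ) ^ ((a : ℂ) * m + (b - 1))‖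
        ≤ ‖(a * m + b) * c m‖ * ((2 * x) ^ a) ^ m * K := by
    have hy0 : 0 < y := (half_pos hx).trans hy.1
    rw [norm_mul _ ((y : ℂ) ^ _), norm_ofReal_cpow_mul_add hy0, mul_assoc, mul_comm _ K]
    gcongr
    · simpa using Real.rpow_le_rpow_add_rpow (half_pos hx) hy.1.le hy.2.le (b.re - 1)
    · exact hy.2.le
  have hderiv (m : ℕ) (y : ℝ) (hy : y ∈ Set.Ioo (x / 2) (2 * x)) :
      HasDerivAt (fun y : ℝ => c m * (y : ℂ) ^ ((a : ℂ) * m + b))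
        ((a * m + b) * c m * (y : ℂ) ^ ((a : ℂ) * m + (b - 1))) y := by
    have hy0 : 0 < y := (half_pos hx).trans hy.1
    refine (((Complex.hasStrictDerivAt_cpow_const (Complex.ofReal_mem_slitPlane.2 hy0)).hasDerivAt
      |>.comp_ofReal).const_mul (c m)).congr_deriv ?_
    rw [add_sub_assoc]; ring
  exact hasDerivAt_tsum_of_isPreconnected (((hc.mul_affine a b) ((2 * x) ^ a)).mul_right K)
    isOpen_Ioo isPreconnected_Ioo hderiv hbound ⟨by linarith, by linarith⟩
    (hc.summable_norm_frobeniusSeries hx).of_norm ⟨by linarith, by linarith⟩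

theorem deriv_frobeniusSeries (hc : SuperGeometricDecay c) (hx : 0 < x) :
    deriv (frobeniusSeries a b c) x
      = frobeniusSeries a (b - 1) (fun m => (a * m + b) * c m) x :=
  (hasDerivAt_frobeniusSeries hc hx).deriv

theorem contDiffOn_frobeniusSeries (hc : SuperGeometricDecay c) :
    ContDiffOn ℝ (⊤ : ℕ∞) (frobeniusSeries a b c) (Set.Ioi 0) := by
  refine contDiffOn_infty.2 fun k => ?_
  induction k generalizing b c with
  | zero =>
    exact contDiffOn_zero.2 fun y hy =>
      (hasDerivAt_frobeniusSeries hc hy).continuousAt.continuousWithinAt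
  | succ k ih =>
    rw [Nat.cast_succ, contDiffOn_succ_iff_deriv_of_isOpen isOpen_Ioi]
    refine ⟨fun y hy => (hasDerivAt_frobeniusSeries hc hy).differentiableAt.differentiableWithinAt,
      by simp, (ih (hc.mul_affine a b)).congr fun y hy => deriv_frobeniusSeries hc hy⟩

theorem iteratedDeriv_frobeniusSeries (hc : SuperGeometricDecay c) (j : ℕ) (hx : 0 < x) :
    iteratedDeriv j (frobeniusSeries a b c) x
      = frobeniusSeries a (b - j) (fun m => (descPochhammer ℂ j).eval (a * m + b) * c m) x := by
  induction j generalizing x with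
  | zero => simp
  | succ j ih =>
    have hev : iteratedDeriv j (frobeniusSeries a b c) =ᶠ[𝓝 x] frobeniusSeries a (b - j)
        (fun m => (descPochhammer ℂ j).eval (a * m + b) * c m) :=
      eventually_of_mem (Ioi_mem_nhds hx) fun y hy => ih hy
    rw [iteratedDeriv_succ, hev.deriv_eq,
      deriv_frobeniusSeries (hc.descPochhammer_eval_mul a b j) hx]
    congr 1
    · push_cast; ring
    · funext m
      rw [descPochhammer_succ_eval]
      ring

theorem ofReal_pow_mul_frobeniusSeries_sub (hx : 0 < x) (j : ℕ) :
    (x : ℂ) ^ j * frobeniusSeries a (b - j) c x = frobeniusSeries a b c x := by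
  rw [frobeniusSeries, ← tsum_mul_left]
  refine tsum_congr fun m => ?_
  rw [mul_left_comm, ← cpow_natCast, ← cpow_add _ _ (ofReal_ne_zero.2 hx.ne')]
  ring_nf

theorem sum_mul_frobeniusSeries {ι : Type*} (s : Finset ι) (v : ι → ℂ) {c : ι → ℕ → ℂ}
    (hc : ∀ i ∈ s, SuperGeometricDecay (c i)) (hx : 0 < x) :
    ∑ i ∈ s, v i * frobeniusSeries a b (c i) x
      = frobeniusSeries a b (fun m => ∑ i ∈ s, v i * c i m) x := by
  simp_rw [frobeniusSeries, ← tsum_mul_left, sum_mul]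
  rw [← Summable.tsum_finsetSum fun i hi =>
    ((hc i hi).summable_norm_frobeniusSeries hx).of_norm.mul_left (v i)]
  simp_rw [mul_assoc]

theorem frobeniusSeries_of_shift (hc : SuperGeometricDecay c) (hx : 0 < x) {d : ℕ → ℂ} (K : ℂ)
    (h0 : d 0 = 0) (hsucc : ∀ m, d (m + 1) = K * c m) :
    frobeniusSeries a b d x = K * x ^ a * frobeniusSeries a b c x := by
  have hshift (m : ℕ) : d (m + 1) * (x : ℂ) ^ ((a : ℂ) * (m + 1 : ℕ) + b)
      = K * x ^ a * (c m * (x : ℂ) ^ ((a : ℂ) * m + b)) := by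
    rw [hsucc, show (a : ℂ) * (m + 1 : ℕ) + b = a + (a * m + b) by push_cast; ring,
      cpow_add _ _ (ofReal_ne_zero.2 hx.ne'), cpow_natCast]
    ring
  have hsum : Summable fun m => d m * (x : ℂ) ^ ((a : ℂ) * m + b) := by
    refine (summable_nat_add_iff 1).1 ?_
    simp_rw [hshift]
    exact (hc.summable_norm_frobeniusSeries hx).of_norm.mul_left _
  rw [frobeniusSeries, hsum.tsum_eq_zero_add, h0, zero_mul, zero_add]
  simp_rw [hshift]
  rw [tsum_mul_left, frobeniusSeries]

end frobeniusSeries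

section besselJ

variable {ι : Type*} [Fintype ι] (lam : ι → ℂ) (l : ι) (s : ℂ)

noncomputable def besselJCoeff (m : ℕ) : ℂ :=
  s ^ m * (∏ k, Gamma (lam k - lam l + m + 1))⁻¹

theorem superGeometricDecay_besselJCoeff : SuperGeometricDecay (besselJCoeff lam l s) :=
  have : Nonempty ι := ⟨l⟩
  (superGeometricDecay_inv_prod_Gamma _).pow_mul s

theorem prod_mul_besselJCoeff_zero (N : ℂ) :
    (∏ k, (N * (0 : ℕ) + -(N * lam l) + N * lam k)) * besselJCoeff lam l s 0 = 0 := by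
  rw [prod_eq_zero (mem_univ l) (by push_cast; ring), zero_mul]

theorem prod_mul_besselJCoeff_succ (N : ℂ) (m : ℕ) :
    (∏ k, (N * (m + 1 : ℕ) + -(N * lam l) + N * lam k)) * besselJCoeff lam l s (m + 1)
      = s * N ^ Fintype.card ι * besselJCoeff lam l s m := by
  have hfactor (k : ι) : N * (m + 1 : ℕ) + -(N * lam l) + N * lam k
      = N * (lam k - lam l + m + 1) := by push_cast; ring
  have hGamma : (∏ k, (lam k - lam l + m + 1)) * (∏ k, Gamma (lam k - lam l + (m + 1 : ℕ) + 1))⁻¹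
      = (∏ k, Gamma (lam k - lam l + m + 1))⁻¹ := by
    rw [← prod_inv_distrib, ← prod_inv_distrib, ← prod_mul_distrib]
    refine prod_congr rfl fun k _ => ?_
    rw [Complex.one_div_Gamma_eq_self_mul_one_div_Gamma_add_one (lam k - lam l + m + 1),
      Nat.cast_succ, ← add_assoc]
  simp only [hfactor, prod_mul_distrib, prod_const, card_univ, besselJCoeff]
  rw [← hGamma, pow_succ]
  ring

end besselJ

theorem stmt_2 (n : ℕ) (lam : Fin n → ℂ)
    (ς : ℂ) (l : Fin n)
    (f : ℝ → ℂ)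
    (hf : ∀ x : ℝ, 0 < x → f x = ∑' m : ℕ,
      (ς * Complex.I ^ n) ^ m * (x : ℂ) ^ ((n : ℂ) * ((m : ℂ) - lam l)) *
        (∏ k, Complex.Gamma (lam k - lam l + m + 1))⁻¹) :
    (∀ x : ℝ, 0 < x → Summable (fun m : ℕ =>
        ‖(ς * Complex.I ^ n) ^ m * (x : ℂ) ^ ((n : ℂ) * ((m : ℂ) - lam l)) *
          (∏ k, Complex.Gamma (lam k - lam l + m + 1))⁻¹‖)) ∧
      ContDiffOn ℝ (⊤ : ℕ∞) f (Set.Ioi 0) ∧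
      ∀ x : ℝ, 0 < x →
        ∑ j ∈ Finset.range (n + 1), besselV n lam j * (x : ℂ) ^ j * iteratedDeriv j f x =
          ς * Complex.I ^ n * (n : ℂ) ^ n * (x : ℂ) ^ n * f x := by
  set c := besselJCoeff lam l (ς * I ^ n)
  set b := -((n : ℂ) * lam l)
  have hc : SuperGeometricDecay c := superGeometricDecay_besselJCoeff lam l _
  have hterm (x : ℝ) (m : ℕ) : (ς * I ^ n) ^ m * (x : ℂ) ^ ((n : ℂ) * ((m : ℂ) - lam l))
      * (∏ k, Gamma (lam k - lam l + m + 1))⁻¹ = c m * (x : ℂ) ^ ((n : ℂ) * m + b) := by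
    rw [mul_right_comm, mul_sub, sub_eq_add_neg]; rfl
  have hfc : Set.EqOn f (frobeniusSeries n b c) (Set.Ioi 0) := fun x hx => by
    simp only [hf x hx, hterm]; rfl
  refine ⟨fun x hx => by simpa only [hterm] using hc.summable_norm_frobeniusSeries hx,
    (contDiffOn_frobeniusSeries hc).congr hfc, fun x hx => ?_⟩
  have hfx : f =ᶠ[𝓝 x] frobeniusSeries n b c := eventually_of_mem (Ioi_mem_nhds hx) hfc
  calc ∑ j ∈ range (n + 1), besselV n lam j * (x : ℂ) ^ j * iteratedDeriv j f x
      = ∑ j ∈ range (n + 1), besselV n lam j * frobeniusSeries n b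
          (fun m => (descPochhammer ℂ j).eval (n * m + b) * c m) x := by
        refine sum_congr rfl fun j _ => ?_
        rw [hfx.iteratedDeriv_eq, iteratedDeriv_frobeniusSeries hc j hx, mul_assoc,
          ofReal_pow_mul_frobeniusSeries_sub hx]
    _ = frobeniusSeries n b (fun m => (∏ k, (n * m + b + n * lam k)) * c m) x := by
        rw [sum_mul_frobeniusSeries _ _ (fun j _ => hc.descPochhammer_eval_mul _ _ j) hx]
        simp_rw [← mul_assoc, ← sum_mul, sum_besselV_mul_descPochhammer_eval]
    _ = ς * I ^ n * n ^ n * x ^ n * f x := by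
        rw [frobeniusSeries_of_shift hc hx _ (prod_mul_besselJCoeff_zero lam l _ _)
          (prod_mul_besselJCoeff_succ lam l _ _), hfc hx, Fintype.card_fin]
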